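/- arXiv:2203.02315 — 2 statements merged into one kernel-verified Lean document; each statement's English description precedes it below -/
import Mathlib

section
/- Let P be a convex lattice polygon in the plane and let a, b, z be lattice points forming a unimodular triangle (a triangle of Euclidean area 1/2) that is contained in P, such that z lies in the interior of P and a and b lie on the boundary of P. Then either a and b lie on a common edge of P, or the lattice point a + b − z is contained in P. -/
/-- The real point corresponding to a lattice point. -/
def toR (p : ℤ × ℤ) : ℝ × ℝ := ((p.1 : ℝ), (p.2 : ℝ))

/-- A lattice polygon: convex hull of finitely many lattice points, with nonempty interior. -/
def IsLatticePolygon (P : Set (ℝ × ℝ)) : Prop :=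
  ∃ S : Finset (ℤ × ℤ), P = convexHull ℝ (↑(S.image toR)) ∧ (interior P).Nonempty

/-- An edge of a convex polygon: a one-dimensional face, i.e. an extreme subset
which is a segment between two distinct points. -/
def IsEdge (P E : Set (ℝ × ℝ)) : Prop :=
  IsExtreme ℝ P E ∧ ∃ u v : ℝ × ℝ, u ≠ v ∧ E = segment ℝ u v

/-- A unimodular lattice triangle: |det(b−a, z−a)| = 1. -/
def Unimodular (a b z : ℤ × ℤ) : Prop :=
  |(b.1 - a.1) * (z.2 - a.2) - (b.2 - a.2) * (z.1 - a.1)| = 1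

/-!
Use affine coordinates with origin `a` and basis `b - a`, `z - a`; by unimodularity they are
integers at lattice points, and `a + b - z` has coordinates `(1, -1)`.
If the midpoint of `ab` is not interior, a supporting line at it contains `a` and `b` and cuts
out an edge of `P`. Otherwise some vertex `w = (x, y)` of `P` has `y < 0`. The supporting lines
at `a` and at `b` have the interior points `z` and the midpoint strictly on one side, which forces
`x > 0` and `1 - x - y > 0`, so `x ≥ 1` and `x + y ≤ 0` by integrality; then `(1, -1)` lies in
the triangle `a b w`.
-/

open Set

section
variable {E : Type*} [NormedAddCommGroup E] [NormedSpace ℝ E]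

theorem Convex.exists_supporting_dual {s : Set E} {x : E} (hs : Convex ℝ s)
    (hsint : (interior s).Nonempty) (hx : x ∉ interior s) :
    ∃ f : StrongDual ℝ E, (∀ y ∈ interior s, f y < f x) ∧ ∀ y ∈ s, f y ≤ f x := by
  obtain ⟨f, hf⟩ := geometric_hahn_banach_open_point hs.interior isOpen_interior hx
  refine ⟨f, hf, fun y hy => ?_⟩
  have hcl : s ⊆ closure (interior s) := by
    rw [hs.closure_interior_eq_closure_of_nonempty_interior hsint]; exact subset_closure
  exact closure_minimal (fun y hy => (hf y hy).le) (isClosed_Iic.preimage f.continuous) (hcl hy)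

theorem exists_lt_of_mem_interior_convexHull {s : Set E} {m : E} {f : StrongDual ℝ E}
    (hf : f ≠ 0) (hm : m ∈ interior (convexHull ℝ s)) : ∃ w ∈ s, f w < f m := by
  by_contra! h
  have hsub : convexHull ℝ s ⊆ {y | f m ≤ f y} :=
    convexHull_min h (convex_halfSpace_ge f.toLinearMap.isLinear _)
  have hmin : IsLocalMin f m := Filter.mem_of_superset (mem_interior_iff_mem_nhds.mp hm) hsub
  exact hf (hmin.hasFDerivAt_eq_zero f.hasFDerivAt)

theorem IsCompact.exists_eq_segment_of_injOn {s : Set E} (hs : IsCompact s) (hc : Convex ℝ s)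
    (hne : s.Nonempty) {G : StrongDual ℝ E} (hG : InjOn G s) :
    ∃ u v, s = segment ℝ u v := by
  obtain ⟨u, hu, humin⟩ := hs.exists_isMinOn hne G.continuous.continuousOn
  obtain ⟨v, hv, hvmax⟩ := hs.exists_isMaxOn hne G.continuous.continuousOn
  refine ⟨u, v, subset_antisymm (fun x hx => ?_) (hc.segment_subset hu hv)⟩
  have hGx : G x ∈ G '' segment ℝ u v := by
    change G x ∈ G.toLinearMap.toAffineMap '' _
    rw [image_segment, segment_eq_Icc ((humin hx).trans (hvmax hx))]
    exact ⟨humin hx, hvmax hx⟩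
  obtain ⟨y, hy, hyx⟩ := hGx
  rwa [hG (hc.segment_subset hu hv hy) hx hyx] at hy

theorem Convex.add_sub_mem_of_sub_eq {P : Set E} (hP : Convex ℝ P) {a b z w : E} {x y : ℝ}
    (ha : a ∈ P) (hb : b ∈ P) (hw : w ∈ P) (hrep : w - a = x • (b - a) + y • (z - a))
    (hx : 1 ≤ x) (hxy : x + y ≤ 0) : a + b - z ∈ P := by
  obtain ⟨γ, hγy, hγ⟩ : ∃ γ : ℝ, γ * y = -1 ∧ 0 < γ :=
    ⟨-y⁻¹, by field_simp [(by linarith : y ≠ 0)], neg_pos.2 (inv_lt_zero.2 (by linarith))⟩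
  have hcomb : a + b - z = (γ * (x - 1)) • a + (1 - γ * x) • b + γ • w := by
    linear_combination (norm := module) -γ • hrep - hγy • (z - a)
  have hβ : 0 ≤ 1 - γ * x := by nlinarith
  have hmem :=
    hP.sum_mem (t := Finset.univ) (w := ![γ * (x - 1), 1 - γ * x, γ]) (z := ![a, b, w])
  simp only [Finset.mem_univ, forall_const, Fin.forall_fin_succ, Fin.isValue, Matrix.cons_val_zero,
    Matrix.cons_val_succ, sub_nonneg, Matrix.cons_val_fin_one, Fin.sum_univ_three,
    Matrix.cons_val_one, Matrix.cons_val, and_imp] at hmem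
  rw [hcomb]
  exact hmem (by nlinarith) (by linarith) hγ.le (by ring) ha hb hw

theorem Convex.coeff_pos_of_notMem_interior {P : Set E} (hP : Convex ℝ P) {a b z w : E} {x y : ℝ}
    (ha : a ∉ interior P) (hm : midpoint ℝ a b ∈ interior P) (hz : z ∈ interior P) (hw : w ∈ P)
    (hrep : w - a = x • (b - a) + y • (z - a)) (hy : y < 0) : 0 < x := by
  obtain ⟨f, hf_int, hf_le⟩ := hP.exists_supporting_dual ⟨z, hz⟩ ha
  have hfb : f b < f a := by
    have := hf_int _ hm
    rw [midpoint_eq_smul_add, map_smul, map_add, smul_eq_mul, invOf_eq_inv] at this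
    linarith
  have hf_rep : f w - f a = x * (f b - f a) + y * (f z - f a) := by
    simpa only [map_sub, map_add, map_smul, smul_eq_mul] using congrArg f hrep
  by_contra! hx
  nlinarith [hf_int z hz, hf_le w hw]

end

theorem exists_injOn_setOf_apply_eq {f : StrongDual ℝ (ℝ × ℝ)} (hf : f ≠ 0) (c : ℝ) :
    ∃ G : StrongDual ℝ (ℝ × ℝ), InjOn G {x | f x = c} := by
  -- `f` precomposed with a quarter turn; together with `f` it determines a point
  refine ⟨f.comp ((ContinuousLinearMap.snd ℝ ℝ ℝ).prod (-ContinuousLinearMap.fst ℝ ℝ ℝ)), ?_⟩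
  have hf_apply : ∀ v : ℝ × ℝ, f v = v.1 * f (1, 0) + v.2 * f (0, 1) := by
    intro v
    conv_lhs => rw [show v = v.1 • ((1 : ℝ), (0 : ℝ)) + v.2 • ((0 : ℝ), (1 : ℝ)) by ext <;> simp]
    simp only [map_add, map_smul, smul_eq_mul]
  intro x hx y hy hxy
  change f x = c at hx
  change f y = c at hy
  change f (x.2, -x.1) = f (y.2, -y.1) at hxy
  rw [hf_apply] at hx hy hxy
  rw [hf_apply (y.2, -y.1)] at hxy
  by_contra hne
  have hd : 0 < (x.1 - y.1) ^ 2 + (x.2 - y.2) ^ 2 := by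
    rcases ne_or_eq x.1 y.1 with h | h
    · have := sub_ne_zero.2 h; positivity
    · have : x.2 - y.2 ≠ 0 := sub_ne_zero.2 fun h' => hne (Prod.ext h h')
      positivity
  apply hf
  have h₁ : ((x.1 - y.1) ^ 2 + (x.2 - y.2) ^ 2) * f (1, 0) = 0 := by
    linear_combination (x.1 - y.1) * (hx.trans hy.symm) + (x.2 - y.2) * hxy
  have h₂ : ((x.1 - y.1) ^ 2 + (x.2 - y.2) ^ 2) * f (0, 1) = 0 := by
    linear_combination (x.2 - y.2) * (hx.trans hy.symm) - (x.1 - y.1) * hxy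
  ext
  · simpa using (mul_eq_zero.1 h₁).resolve_left hd.ne'
  · simpa using (mul_eq_zero.1 h₂).resolve_left hd.ne'

theorem isEdge_toExposed {P : Set (ℝ × ℝ)} (hPk : IsCompact P) (hPc : Convex ℝ P)
    {f : StrongDual ℝ (ℝ × ℝ)} (hf : f ≠ 0) {p q : ℝ × ℝ} (hp : p ∈ f.toExposed P)
    (hq : q ∈ f.toExposed P) (hpq : p ≠ q) : IsEdge P (f.toExposed P) := by
  have hexp : IsExposed ℝ P (f.toExposed P) := ContinuousLinearMap.toExposed.isExposed
  refine ⟨hexp.isExtreme, ?_⟩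
  obtain ⟨G, hG⟩ := exists_injOn_setOf_apply_eq hf (f p)
  have hline : f.toExposed P ⊆ {x | f x = f p} := fun x hx =>
    le_antisymm (hp.2 x hx.1) (hx.2 p hp.1)
  obtain ⟨u, v, huv⟩ :=
    (hexp.isCompact hPk).exists_eq_segment_of_injOn (hexp.convex hPc) ⟨p, hp⟩ (hG.mono hline)
  refine ⟨u, v, fun h => hpq ?_, huv⟩
  rw [h, segment_same] at huv
  rw [huv] at hp hq
  exact hp.trans hq.symm

theorem exists_isEdge_of_midpoint_notMem_interior {P : Set (ℝ × ℝ)} (hPk : IsCompact P)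
    (hPc : Convex ℝ P) (hint : (interior P).Nonempty) {a b : ℝ × ℝ} (ha : a ∈ P) (hb : b ∈ P)
    (hab : a ≠ b) (hm : midpoint ℝ a b ∉ interior P) :
    ∃ E, IsEdge P E ∧ a ∈ E ∧ b ∈ E := by
  obtain ⟨f, hf_int, hf_le⟩ := hPc.exists_supporting_dual hint hm
  have hf_mid : f (midpoint ℝ a b) = (f a + f b) / 2 := by
    rw [midpoint_eq_smul_add, map_smul, map_add, smul_eq_mul, invOf_eq_inv]; ring
  have hfa : f a = f (midpoint ℝ a b) := by linarith [hf_le a ha, hf_le b hb]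
  have hfb : f b = f (midpoint ℝ a b) := by linarith [hf_le a ha, hf_le b hb]
  have hf : f ≠ 0 := by
    rintro rfl
    obtain ⟨y, hy⟩ := hint
    simpa using hf_int y hy
  have haE : a ∈ f.toExposed P := ⟨ha, fun y hy => hfa ▸ hf_le y hy⟩
  have hbE : b ∈ f.toExposed P := ⟨hb, fun y hy => hfb ▸ hf_le y hy⟩
  exact ⟨f.toExposed P, isEdge_toExposed hPk hPc hf haE hbE hab, haE, hbE⟩

theorem Unimodular.toR_ne {a b z : ℤ × ℤ} (h : Unimodular a b z) : toR a ≠ toR b := by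
  intro hab
  simp only [toR, Prod.mk.injEq, Int.cast_inj] at hab
  simp [Unimodular, hab.1, hab.2] at h

theorem Unimodular.exists_int_coords {a b z : ℤ × ℤ} (h : Unimodular a b z) (w : ℤ × ℤ) :
    ∃ x y : ℤ, toR w - toR a = (x : ℝ) • (toR b - toR a) + (y : ℝ) • (toR z - toR a) := by
  set d := (b.1 - a.1) * (z.2 - a.2) - (b.2 - a.2) * (z.1 - a.1) with hd
  have hd2 : (d : ℝ) * d = 1 := by
    rcases (abs_eq zero_le_one).1 (show |d| = 1 from h) with h | h <;> simp [h]
  refine ⟨d * ((w.1 - a.1) * (z.2 - a.2) - (w.2 - a.2) * (z.1 - a.1)),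
    d * ((b.1 - a.1) * (w.2 - a.2) - (b.2 - a.2) * (w.1 - a.1)), ?_⟩
  push_cast [hd] at hd2 ⊢
  ext <;> simp only [toR, Prod.fst_sub, Prod.snd_sub, Prod.fst_add, Prod.snd_add,
    Prod.smul_fst, Prod.smul_snd, smul_eq_mul]
  · linear_combination (-((w.1 : ℝ) - a.1)) * hd2
  · linear_combination (-((w.2 : ℝ) - a.2)) * hd2

theorem exists_dual_apply_eq_zero_apply_eq_one {u v : ℝ × ℝ} (h : u.1 * v.2 - u.2 * v.1 ≠ 0) :
    ∃ l : StrongDual ℝ (ℝ × ℝ), l u = 0 ∧ l v = 1 := by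
  refine ⟨(u.1 * v.2 - u.2 * v.1)⁻¹ •
    (u.1 • ContinuousLinearMap.snd ℝ ℝ ℝ - u.2 • ContinuousLinearMap.fst ℝ ℝ ℝ), ?_, ?_⟩
  all_goals simp only [smul_apply, sub_apply, ContinuousLinearMap.coe_snd',
    ContinuousLinearMap.coe_fst', smul_eq_mul]
  · ring
  · exact inv_mul_cancel₀ h

theorem Unimodular.exists_vertex_coord_neg {S : Finset (ℤ × ℤ)} {a b z : ℤ × ℤ}
    (h : Unimodular a b z)
    (hm : midpoint ℝ (toR a) (toR b) ∈ interior (convexHull ℝ ↑(S.image toR))) :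
    ∃ w ∈ S, ∃ x y : ℤ,
      toR w - toR a = (x : ℝ) • (toR b - toR a) + (y : ℝ) • (toR z - toR a) ∧ y < 0 := by
  have hcross :
      (toR b - toR a).1 * (toR z - toR a).2 - (toR b - toR a).2 * (toR z - toR a).1 ≠ 0 := by
    have h' : ((b.1 - a.1) * (z.2 - a.2) - (b.2 - a.2) * (z.1 - a.1) : ℤ) ≠ 0 := by
      intro h0; simp [Unimodular, h0] at h
    simpa [toR] using (Int.cast_ne_zero (α := ℝ)).2 h'
  obtain ⟨l, hlb, hlz⟩ := exists_dual_apply_eq_zero_apply_eq_one hcross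
  obtain ⟨_, hw, hlw⟩ :=
    exists_lt_of_mem_interior_convexHull (f := l) (fun h0 => by simp [h0] at hlz) hm
  obtain ⟨w, hwS, rfl⟩ := Finset.mem_image.1 (Finset.mem_coe.1 hw)
  obtain ⟨x, y, hrep⟩ := h.exists_int_coords w
  refine ⟨w, hwS, x, y, hrep, ?_⟩
  have hly : l (toR w - toR a) = y := by
    rw [hrep, map_add, map_smul, map_smul, hlb, hlz, smul_eq_mul, smul_eq_mul]; ring
  have hlm : l (midpoint ℝ (toR a) (toR b) - toR a) = 0 := by
    rw [← vsub_eq_sub, midpoint_vsub_left, vsub_eq_sub, map_smul, hlb, smul_zero]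
  rw [map_sub] at hly hlm
  exact_mod_cast (show (y : ℝ) < 0 by linarith)

theorem Unimodular.add_sub_mem_of_midpoint_mem_interior {P : Set (ℝ × ℝ)} {S : Finset (ℤ × ℤ)}
    (hPS : P = convexHull ℝ ↑(S.image toR)) {a b z : ℤ × ℤ} (h : Unimodular a b z)
    (ha : toR a ∈ P) (hb : toR b ∈ P) (ha' : toR a ∉ interior P) (hb' : toR b ∉ interior P)
    (hz : toR z ∈ interior P) (hm : midpoint ℝ (toR a) (toR b) ∈ interior P) :
    toR (a + b - z) ∈ P := by
  have hP : Convex ℝ P := hPS ▸ convex_convexHull ℝ _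
  obtain ⟨w, hwS, x, y, hrep, hy⟩ := h.exists_vertex_coord_neg (hPS ▸ hm)
  have hw : toR w ∈ P :=
    hPS ▸ subset_convexHull ℝ _ (Finset.mem_coe.2 (Finset.mem_image_of_mem toR hwS))
  have hy' : (y : ℝ) < 0 := by exact_mod_cast hy
  have hx : (0 : ℤ) < x := by
    exact_mod_cast hP.coeff_pos_of_notMem_interior ha' hm hz hw hrep hy'
  have hxy : (0 : ℤ) < 1 - x - y := by
    have hrep' :
        toR w - toR b = ((1 : ℝ) - x - y) • (toR a - toR b) + (y : ℝ) • (toR z - toR b) := by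
      linear_combination (norm := module) hrep
    exact_mod_cast hP.coeff_pos_of_notMem_interior hb'
      (midpoint_comm (R := ℝ) (toR a) (toR b) ▸ hm) hz hw hrep' hy'
  have htoR : toR (a + b - z) = toR a + toR b - toR z := by ext <;> simp [toR]
  rw [htoR]
  exact hP.add_sub_mem_of_sub_eq ha hb hw hrep (by exact_mod_cast hx)
    (by exact_mod_cast (by omega : x + y ≤ 0))

theorem stmt0 (P : Set (ℝ × ℝ)) (hP : IsLatticePolygon P)
    (a b z : ℤ × ℤ) (huni : Unimodular a b z)
    (hsub : convexHull ℝ {toR a, toR b, toR z} ⊆ P)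
    (hz : toR z ∈ interior P)
    (ha : toR a ∈ frontier P) (hb : toR b ∈ frontier P) :
    (∃ E : Set (ℝ × ℝ), IsEdge P E ∧ toR a ∈ E ∧ toR b ∈ E) ∨ toR (a + b - z) ∈ P := by
  obtain ⟨S, hPS, -⟩ := hP
  have hPc : Convex ℝ P := hPS ▸ convex_convexHull ℝ _
  have hPk : IsCompact P := hPS ▸ (S.image toR).finite_toSet.isCompact_convexHull (𝕜 := ℝ)
  have hA : toR a ∈ P := hsub (subset_convexHull ℝ _ (by simp))
  have hB : toR b ∈ P := hsub (subset_convexHull ℝ _ (by simp))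
  by_cases hm : midpoint ℝ (toR a) (toR b) ∈ interior P
  · exact Or.inr (huni.add_sub_mem_of_midpoint_mem_interior hPS hA hB ha.2 hb.2 hz hm)
  · exact Or.inl (exists_isEdge_of_midpoint_notMem_interior hPk hPc ⟨_, hz⟩ hA hB huni.toR_ne hm)
end

section
/- Let P be a convex lattice polygon containing the unimodular triangle T₁ with vertices (0,0), (1,0), (0,1), such that (0,0) is an interior lattice point of P, and such that (1,0) and (0,1) lie on the boundary of P but not on a common edge of P. Then (1,1) is a point of P. -/
section Support

variable {E : Type*} [TopologicalSpace E] [AddCommGroup E] [Module ℝ E]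
  [IsTopologicalAddGroup E] [ContinuousSMul ℝ E]

theorem Convex.exists_forall_le_of_notMem_interior {P : Set E} (hP : Convex ℝ P)
    (hint : (interior P).Nonempty) {q : E} (hq : q ∉ interior P) :
    ∃ f : StrongDual ℝ E, (∀ p ∈ P, f p ≤ f q) ∧ ∀ a ∈ interior P, f a < f q := by
  obtain ⟨f, hf⟩ := geometric_hahn_banach_open_point hP.interior isOpen_interior hq
  refine ⟨f, fun p hp => ?_, hf⟩
  have hp' : p ∈ closure (interior P) :=
    hP.closure_interior_eq_closure_of_nonempty_interior hint ▸ subset_closure hp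
  exact closure_minimal (fun a ha => (hf a ha).le) (isClosed_le f.continuous continuous_const) hp'

theorem Convex.pos_of_smul_add_smul_mem {P : Set E} (hP : Convex ℝ P) (h0 : (0 : E) ∈ interior P)
    {e e' : E} (he : e ∉ interior P) (he' : e' ∈ P) {s t : ℝ} (hw : s • e + t • e' ∈ P)
    (hst : 1 < s + t) : 0 < t := by
  obtain ⟨f, hfP, hfint⟩ := hP.exists_forall_le_of_notMem_interior ⟨0, h0⟩ he
  have hfe : 0 < f e := by simpa using hfint 0 h0
  have hfe' := hfP e' he'
  have hfw := hfP _ hw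
  rw [map_add, map_smul, map_smul, smul_eq_mul, smul_eq_mul] at hfw
  by_contra! ht
  -- `f (s • e + t • e') = (s + t) * f e + t * (f e' - f e) > f e` when `t ≤ 0`
  nlinarith [mul_nonneg (sub_nonneg.mpr hfe') (neg_nonneg.mpr ht)]

end Support

theorem IsCompact.exists_eq_segment_of_forall_fst_add_snd_eq {K : Set (ℝ × ℝ)} (hK : IsCompact K)
    (hconv : Convex ℝ K) (hne : K.Nonempty) {c : ℝ} (hline : ∀ p ∈ K, p.1 + p.2 = c) :
    ∃ u ∈ K, ∃ v ∈ K, K = segment ℝ u v := by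
  obtain ⟨u, hu, humin⟩ := hK.exists_isMinOn hne continuous_snd.continuousOn
  obtain ⟨v, hv, hvmax⟩ := hK.exists_isMaxOn hne continuous_snd.continuousOn
  refine ⟨u, hu, v, hv, subset_antisymm (fun p hp => ?_) (hconv.segment_subset hu hv)⟩
  have hp2 : p.2 ∈ segment ℝ u.2 v.2 := by
    rw [segment_eq_Icc (le_trans (humin hp) (hvmax hp))]
    exact ⟨humin hp, hvmax hp⟩
  obtain ⟨q, hq, hqp : q.2 = p.2⟩ := (image_segment ℝ (LinearMap.snd ℝ ℝ ℝ).toAffineMap u v).ge hp2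
  have hqK := hconv.segment_subset hu hv hq
  obtain rfl : q = p := Prod.ext (by linarith [hline q hqK, hline p hp]) hqp
  exact hq

theorem exists_isEdge_of_forall_fst_add_snd_le_one {P : Set (ℝ × ℝ)} (hPc : IsCompact P)
    (hconv : Convex ℝ P) (h10 : ((1 : ℝ), (0 : ℝ)) ∈ P) (h01 : ((0 : ℝ), (1 : ℝ)) ∈ P)
    (hle : ∀ p ∈ P, p.1 + p.2 ≤ 1) :
    ∃ E : Set (ℝ × ℝ), IsEdge P E ∧ ((1 : ℝ), (0 : ℝ)) ∈ E ∧ ((0 : ℝ), (1 : ℝ)) ∈ E := by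
  let l : StrongDual ℝ (ℝ × ℝ) := .fst ℝ ℝ ℝ + .snd ℝ ℝ ℝ
  have hexp : IsExposed ℝ P (l.toExposed P) := ContinuousLinearMap.toExposed.isExposed
  have mem_of_eq_one {x : ℝ × ℝ} (hx : x ∈ P) (hx1 : x.1 + x.2 = 1) : x ∈ l.toExposed P :=
    ⟨hx, fun y hy => by simpa [l, hx1] using hle y hy⟩
  have h10F := mem_of_eq_one h10 (by norm_num)
  have h01F := mem_of_eq_one h01 (by norm_num)
  have hline (x : ℝ × ℝ) (hx : x ∈ l.toExposed P) : x.1 + x.2 = 1 :=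
    le_antisymm (hle x hx.1) (by simpa [l] using hx.2 _ h10)
  obtain ⟨u, -, v, -, hseg⟩ := (hexp.isCompact hPc).exists_eq_segment_of_forall_fst_add_snd_eq
    (hexp.convex hconv) ⟨_, h10F⟩ hline
  refine ⟨_, ⟨hexp.isExtreme, u, v, ?_, hseg⟩, h10F, h01F⟩
  rintro rfl
  rw [segment_same] at hseg
  rw [hseg, Set.mem_singleton_iff] at h10F h01F
  simp [← h01F] at h10F

theorem Convex.one_one_mem {P : Set (ℝ × ℝ)} (hconv : Convex ℝ P)
    (h10 : ((1 : ℝ), (0 : ℝ)) ∈ P) (h01 : ((0 : ℝ), (1 : ℝ)) ∈ P) {w : ℝ × ℝ} (hw : w ∈ P)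
    (hw1 : 1 ≤ w.1) (hw2 : 1 ≤ w.2) : ((1 : ℝ), (1 : ℝ)) ∈ P := by
  have hs : 0 < w.1 + w.2 - 1 := by linarith
  -- `(1,1)` is on the segment from `(0,1)` to the point where `[(1,0), w]` meets the line `y = 1`
  have hr : w.2⁻¹ • w + (1 - w.2⁻¹) • ((1 : ℝ), (0 : ℝ)) ∈ P :=
    hconv hw h10 (by positivity) (sub_nonneg.2 (inv_le_one_of_one_le₀ hw2)) (by ring)
  convert hconv hr h01 (a := w.2 / (w.1 + w.2 - 1)) (b := (w.1 - 1) / (w.1 + w.2 - 1))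
    (by positivity) (div_nonneg (by linarith) hs.le) (by field_simp; ring) using 1
  ext <;> simp only [Prod.fst_add, Prod.snd_add, Prod.smul_fst, Prod.smul_snd, smul_eq_mul] <;>
    field_simp <;> ring

theorem stmt1 (P : Set (ℝ × ℝ)) (hP : IsLatticePolygon P)
    (hsub : convexHull ℝ {((0 : ℝ), (0 : ℝ)), (1, 0), (0, 1)} ⊆ P)
    (h00 : ((0 : ℝ), (0 : ℝ)) ∈ interior P)
    (h10 : ((1 : ℝ), (0 : ℝ)) ∈ frontier P)
    (h01 : ((0 : ℝ), (1 : ℝ)) ∈ frontier P)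
    (hnoedge : ¬ ∃ E : Set (ℝ × ℝ), IsEdge P E ∧ ((1 : ℝ), (0 : ℝ)) ∈ E ∧ ((0 : ℝ), (1 : ℝ)) ∈ E) :
    ((1 : ℝ), (1 : ℝ)) ∈ P := by
  obtain ⟨S, hPeq, -⟩ := hP
  have hPc : IsCompact P := hPeq ▸ (S.image toR).finite_toSet.isCompact_convexHull (𝕜 := ℝ)
  have hconv : Convex ℝ P := hPeq ▸ convex_convexHull ℝ _
  have h10P : ((1 : ℝ), (0 : ℝ)) ∈ P := hsub (subset_convexHull ℝ _ (by simp))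
  have h01P : ((0 : ℝ), (1 : ℝ)) ∈ P := hsub (subset_convexHull ℝ _ (by simp))
  obtain ⟨p, hp, hp1⟩ : ∃ p ∈ P, 1 < p.1 + p.2 := by
    by_contra! hle
    exact hnoedge (exists_isEdge_of_forall_fst_add_snd_le_one hPc hconv h10P h01P hle)
  obtain ⟨_, hwV, hpw⟩ :=
    ((LinearMap.fst ℝ ℝ ℝ + LinearMap.snd ℝ ℝ ℝ).convexOn convex_univ).exists_ge_of_mem_convexHull
      (Set.subset_univ _) (hPeq ▸ hp)
  obtain ⟨w, -, rfl⟩ := Finset.mem_image.mp hwV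
  have hwP : toR w ∈ P := hPeq ▸ subset_convexHull ℝ _ hwV
  have hw : (w.1 : ℝ) • ((1 : ℝ), (0 : ℝ)) + (w.2 : ℝ) • ((0 : ℝ), (1 : ℝ)) ∈ P := by
    convert hwP using 1; ext <;> simp [toR]
  have hsum : 1 < (w.1 : ℝ) + w.2 := hp1.trans_le hpw
  have hw2 := hconv.pos_of_smul_add_smul_mem h00 h10.2 h01P hw hsum
  have hw1 := hconv.pos_of_smul_add_smul_mem h00 h01.2 h10P ((add_comm _ _).subst hw)
    ((add_comm _ _).subst hsum)
  have one_le {z : ℤ} (hz : (0 : ℝ) < z) : (1 : ℝ) ≤ z := by exact_mod_cast Int.cast_pos.mp hz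
  exact hconv.one_one_mem h10P h01P hwP (one_le hw1) (one_le hw2)
end
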